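/- Let α > 1, γ = ln 2 / ln α. For sufficiently large M, the function f(t) = (∫_{M/α}^t e^s s^{-γ} ds - e^t t^{-γ}) / ∫_{M/α}^t e^s s^{-2γ} ds is strictly positive for all t ≥ M, and lim_{t→∞} f(t) = 1 if γ = 1 and = ∞ if γ > 1. -/

import Mathlib

open Filter intervalIntegral

section Aux
open Real Topology MeasureTheory

lemma myContOn (β : ℝ) {s : Set ℝ} (hs : ∀ x ∈ s, x ≠ 0) :
    ContinuousOn (fun x : ℝ => Real.exp x * x ^ (-β)) s :=
  continuous_exp.continuousOn.mul
    (fun x hx => (Real.continuousAt_rpow_const x (-β) (Or.inl (hs x hx))).continuousWithinAt)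

lemma myInt (β : ℝ) {a b : ℝ} (ha : 0 < a) (hb : 0 < b) :
    IntervalIntegrable (fun s : ℝ => Real.exp s * s ^ (-β)) MeasureTheory.volume a b := by
  apply (myContOn β ?_).intervalIntegrable
  intro x hx
  rw [Set.mem_uIcc] at hx
  rcases hx with ⟨h1, _⟩ | ⟨h1, _⟩
  · exact (ha.trans_le h1).ne'
  · exact (hb.trans_le h1).ne'

lemma myIbp (β : ℝ) {a t : ℝ} (ha : 0 < a) (hat : a ≤ t) :
    (∫ s in a..t, Real.exp s * s ^ (-β)) =
      Real.exp t * t ^ (-β) - Real.exp a * a ^ (-β) +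
        β * ∫ s in a..t, Real.exp s * s ^ (-(β + 1)) := by
  have hsub : Set.uIcc a t ⊆ {x : ℝ | x ≠ 0} := by
    rw [Set.uIcc_of_le hat]
    intro x hx
    exact (lt_of_lt_of_le ha hx.1).ne'
  have key : ∀ s ∈ Set.uIcc a t, HasDerivAt (fun x : ℝ => Real.exp x * x ^ (-β))
      (Real.exp s * s ^ (-β) + Real.exp s * (-β * s ^ (-β - 1))) s := by
    intro s hs
    exact (Real.hasDerivAt_exp s).mul (Real.hasDerivAt_rpow_const (Or.inl (hsub hs)))
  have hint : IntervalIntegrable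
      (fun s : ℝ => Real.exp s * s ^ (-β) + Real.exp s * (-β * s ^ (-β - 1)))
      MeasureTheory.volume a t := by
    have h2 : (fun s : ℝ => Real.exp s * s ^ (-β) + Real.exp s * (-β * s ^ (-β - 1)))
        = fun s : ℝ => Real.exp s * s ^ (-β) + (-β) * (Real.exp s * s ^ (-(β+1))) := by
      funext s; rw [show -β - 1 = -(β+1) by ring]; ring
    rw [h2]
    exact (myInt β ha (lt_of_lt_of_le ha hat)).add
      (((myInt (β+1) ha (lt_of_lt_of_le ha hat)).const_mul (-β)))
  have h1 := intervalIntegral.integral_eq_sub_of_hasDerivAt key hint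
  have h2 : (∫ s in a..t, (Real.exp s * s ^ (-β) + Real.exp s * (-β * s ^ (-β - 1))))
      = (∫ s in a..t, Real.exp s * s ^ (-β)) +
        (-β) * ∫ s in a..t, Real.exp s * s ^ (-(β+1)) := by
    rw [show (fun s : ℝ => Real.exp s * s ^ (-β) + Real.exp s * (-β * s ^ (-β - 1)))
        = fun s : ℝ => Real.exp s * s ^ (-β) + (-β) * (Real.exp s * s ^ (-(β+1))) by
      funext s; rw [show -β - 1 = -(β+1) by ring]; ring] at *
    rw [intervalIntegral.integral_add (myInt β ha (lt_of_lt_of_le ha hat))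
      ((myInt (β+1) ha (lt_of_lt_of_le ha hat)).const_mul (-β)),
      intervalIntegral.integral_const_mul]
  rw [h2] at h1
  linarith

lemma myDecay (β : ℝ) (hβ : 0 ≤ β) {a : ℝ} (ha : 0 < a) :
    Tendsto (fun t : ℝ => (∫ s in a..t, Real.exp s * s ^ (-β)) * t ^ (β - 1) / Real.exp t)
      atTop (𝓝 0) := by
  have hUlim : Tendsto (fun t : ℝ =>
      a ^ (-β) * (t ^ (β - 1) * Real.exp (-(1/2) * t)) + (2:ℝ) ^ β / t) atTop (𝓝 0) := by
    have h1 := (tendsto_rpow_mul_exp_neg_mul_atTop_nhds_zero (β - 1) (1/2)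
      (by norm_num)).const_mul (a ^ (-β))
    have h2 := tendsto_inv_atTop_zero.const_mul ((2:ℝ) ^ β)
    simpa [div_eq_mul_inv] using h1.add h2
  refine tendsto_of_tendsto_of_tendsto_of_le_of_le' tendsto_const_nhds hUlim ?_ ?_
  · filter_upwards [eventually_ge_atTop (max a 1)] with t ht
    have ht1 : (1:ℝ) ≤ t := le_trans (le_max_right _ _) ht
    have hat : a ≤ t := le_trans (le_max_left _ _) ht
    have hInn : 0 ≤ ∫ s in a..t, Real.exp s * s ^ (-β) :=
      intervalIntegral.integral_nonneg hat
        (fun s hs => mul_nonneg (Real.exp_pos s).le (Real.rpow_nonneg (ha.trans_le hs.1).le _))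
    positivity
  · filter_upwards [eventually_ge_atTop (max (2*a) 1)] with t ht
    have ht1 : (1:ℝ) ≤ t := le_trans (le_max_right _ _) ht
    have ht0 : (0:ℝ) < t := lt_of_lt_of_le one_pos ht1
    have hta : 2*a ≤ t := le_trans (le_max_left _ _) ht
    have hat2 : a ≤ t/2 := by linarith
    have ht2 : (0:ℝ) < t/2 := lt_of_lt_of_le ha hat2
    have hsplit : (∫ s in a..t, Real.exp s * s ^ (-β)) =
        (∫ s in a..(t/2), Real.exp s * s ^ (-β)) + ∫ s in (t/2)..t, Real.exp s * s ^ (-β) :=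
      (intervalIntegral.integral_add_adjacent_intervals (myInt β ha ht2) (myInt β ht2 ht0)).symm
    have hb1 : (∫ s in a..(t/2), Real.exp s * s ^ (-β)) ≤ a ^ (-β) * Real.exp (t/2) := by
      have hm : (∫ s in a..(t/2), Real.exp s * s ^ (-β)) ≤
          ∫ s in a..(t/2), Real.exp s * a ^ (-β) :=
        intervalIntegral.integral_mono_on hat2 (myInt β ha ht2)
          ((continuous_exp.mul continuous_const).intervalIntegrable _ _) (fun x hx =>
            mul_le_mul_of_nonneg_left
              (Real.rpow_le_rpow_of_nonpos ha hx.1 (neg_nonpos.2 hβ)) (Real.exp_pos x).le)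
      have hv : (∫ s in a..(t/2), Real.exp s * a ^ (-β)) =
          (Real.exp (t/2) - Real.exp a) * a ^ (-β) := by
        rw [intervalIntegral.integral_mul_const, integral_exp]
      rw [hv] at hm
      refine le_trans hm ?_
      have hexp : 0 < Real.exp a := Real.exp_pos a
      nlinarith [Real.rpow_nonneg ha.le (-β)]
    have hb2 : (∫ s in (t/2)..t, Real.exp s * s ^ (-β)) ≤ (t/2) ^ (-β) * Real.exp t := by
      have hm : (∫ s in (t/2)..t, Real.exp s * s ^ (-β)) ≤
          ∫ s in (t/2)..t, Real.exp s * (t/2) ^ (-β) :=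
        intervalIntegral.integral_mono_on (by linarith) (myInt β ht2 ht0)
          ((continuous_exp.mul continuous_const).intervalIntegrable _ _) (fun x hx =>
            mul_le_mul_of_nonneg_left
              (Real.rpow_le_rpow_of_nonpos ht2 hx.1 (neg_nonpos.2 hβ)) (Real.exp_pos x).le)
      have hv : (∫ s in (t/2)..t, Real.exp s * (t/2) ^ (-β)) =
          (Real.exp t - Real.exp (t/2)) * (t/2) ^ (-β) := by
        rw [intervalIntegral.integral_mul_const, integral_exp]
      rw [hv] at hm
      refine le_trans hm ?_
      have hexp : 0 < Real.exp (t/2) := Real.exp_pos _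
      nlinarith [Real.rpow_nonneg ht2.le (-β)]
    have hI : (∫ s in a..t, Real.exp s * s ^ (-β)) ≤
        a ^ (-β) * Real.exp (t/2) + (t/2) ^ (-β) * Real.exp t := by
      rw [hsplit]; exact add_le_add hb1 hb2
    have htp : (0:ℝ) ≤ t ^ (β - 1) := Real.rpow_nonneg ht0.le _
    calc (∫ s in a..t, Real.exp s * s ^ (-β)) * t ^ (β - 1) / Real.exp t
        ≤ (a ^ (-β) * Real.exp (t/2) + (t/2) ^ (-β) * Real.exp t) * t ^ (β - 1) / Real.exp t := by
          gcongr
      _ = a ^ (-β) * (t ^ (β - 1) * Real.exp (-(1/2) * t)) + (2:ℝ) ^ β / t := by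
          have h2β : ((t/2):ℝ) ^ (-β) * t ^ (β - 1) = (2:ℝ) ^ β / t := by
            rw [Real.div_rpow ht0.le (by norm_num : (0:ℝ) ≤ 2),
              Real.rpow_neg (by norm_num : (0:ℝ) ≤ 2),
              div_eq_mul_inv _ ((2:ℝ)^β)⁻¹, inv_inv, mul_comm (t ^ (-β)) _,
              mul_assoc, ← Real.rpow_add ht0, show -β + (β - 1) = -1 by ring,
              Real.rpow_neg_one, div_eq_mul_inv]
          have hE : Real.exp (-(1/2) * t) = Real.exp (t/2) / Real.exp t := by
            rw [← Real.exp_sub]; congr 1; ring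
          rw [hE, ← h2β]
          field_simp

lemma myConstDecay (C β : ℝ) :
    Tendsto (fun t : ℝ => C * t ^ β / Real.exp t) atTop (𝓝 0) := by
  have h := (tendsto_exp_div_rpow_atTop β).inv_tendsto_atTop.const_mul C
  rw [mul_zero] at h
  refine h.congr (fun t => ?_)
  simp only [Pi.inv_apply, inv_div, mul_div_assoc]

lemma myRatio (β : ℝ) (hβ : 0 ≤ β) {a : ℝ} (ha : 0 < a) :
    Tendsto (fun t : ℝ => (∫ s in a..t, Real.exp s * s ^ (-β)) * t ^ β / Real.exp t)
      atTop (𝓝 1) := by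
  have h0 : Tendsto (fun t : ℝ => Real.exp a * a ^ (-β) * t ^ β / Real.exp t) atTop (𝓝 0) :=
    myConstDecay _ _
  have h1 : Tendsto (fun t : ℝ =>
      (∫ s in a..t, Real.exp s * s ^ (-(β+1))) * t ^ β / Real.exp t) atTop (𝓝 0) := by
    have := myDecay (β+1) (by linarith) ha
    simpa using this
  have hg : Tendsto (fun t : ℝ => 1 - Real.exp a * a ^ (-β) * t ^ β / Real.exp t +
      β * ((∫ s in a..t, Real.exp s * s ^ (-(β+1))) * t ^ β / Real.exp t)) atTop (𝓝 1) := by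
    have := (tendsto_const_nhds (x := (1:ℝ)) (f := atTop)).sub h0 |>.add (h1.const_mul β)
    simpa using this
  refine hg.congr' ?_
  filter_upwards [eventually_ge_atTop (max a 1)] with t ht
  have hat : a ≤ t := le_trans (le_max_left _ _) ht
  have ht0 : (0:ℝ) < t := lt_of_lt_of_le one_pos (le_trans (le_max_right _ _) ht)
  rw [myIbp β ha hat]
  have htβ : (0:ℝ) < t ^ β := Real.rpow_pos_of_pos ht0 β
  rw [Real.rpow_neg ht0.le β]
  field_simp

end Aux

/-- The quotient `f(t)` appearing in the supersolution construction. -/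
noncomputable def fQuot (γ M : ℝ) (α : ℝ) (t : ℝ) : ℝ :=
  ((∫ s in (M / α)..t, Real.exp s * s ^ (-γ)) - Real.exp t * t ^ (-γ)) /
    ∫ s in (M / α)..t, Real.exp s * s ^ (-(2 * γ))

/-- For `α > 1` and `γ = ln 2 / ln α`, for sufficiently large `M` the function
`f(t) = (∫_{M/α}^t e^s s^{-γ} ds - e^t t^{-γ}) / ∫_{M/α}^t e^s s^{-2γ} ds`
is strictly positive for all `t ≥ M`; moreover `f(t) → 1` as `t → ∞` if `γ = 1`
and `f(t) → ∞` if `γ > 1`. -/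
theorem fQuot_positive_and_limit (α : ℝ) (hα : 1 < α) :
    ∃ M₀ : ℝ, 0 < M₀ ∧ ∀ M : ℝ, M₀ ≤ M →
      (∀ t : ℝ, M ≤ t → 0 < fQuot (Real.log 2 / Real.log α) M α t) ∧
      (Real.log 2 / Real.log α = 1 →
        Tendsto (fQuot (Real.log 2 / Real.log α) M α) atTop (nhds 1)) ∧
      (1 < Real.log 2 / Real.log α →
        Tendsto (fQuot (Real.log 2 / Real.log α) M α) atTop atTop) := by
  have hα0 : (0:ℝ) < α := lt_trans one_pos hα
  set γ := Real.log 2 / Real.log α with hγdef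
  have hγ : 0 < γ := div_pos (Real.log_pos one_lt_two) (Real.log_pos hα)
  have hc : (0:ℝ) < 1 - 1/α := by
    have h1 : 1/α < 1 := by rw [div_lt_one hα0]; exact hα
    linarith
  set c := 1 - 1/α with hcdef
  have h1 : Tendsto (fun x : ℝ => Real.exp (c*x)/x) atTop atTop := by
    simpa [Real.rpow_one] using tendsto_exp_mul_div_rpow_atTop 1 c hc
  have hK : (0:ℝ) < γ * α^(-γ) * Real.exp (-1) := by positivity
  have hgrow : Tendsto (fun M : ℝ => γ * α^(-γ) * (Real.exp (c*M-1)/M)) atTop atTop := by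
    refine (h1.const_mul_atTop hK).congr (fun M => ?_)
    rw [show c*M-1 = c*M + (-1) by ring, Real.exp_add]; ring
  obtain ⟨M₁, hM₁⟩ := Filter.eventually_atTop.1 (hgrow.eventually_gt_atTop 1)
  refine ⟨max (max M₁ (1/c)) 2, lt_of_lt_of_le two_pos (le_max_right _ _), ?_⟩
  intro M hM
  have hM2 : (2:ℝ) ≤ M := le_trans (le_max_right _ _) hM
  have hM0 : (0:ℝ) < M := by linarith
  have hMc : 1 ≤ c * M := by
    have h1c : 1/c ≤ M := le_trans (le_trans (le_max_right _ _) (le_max_left _ _)) hM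
    rw [div_le_iff₀ hc] at h1c
    linarith [h1c]
  have hgt : 1 < γ * α^(-γ) * (Real.exp (c*M-1)/M) :=
    hM₁ M (le_trans (le_trans (le_max_left _ _) (le_max_left _ _)) hM)
  set a := M/α with hadef
  have ha0 : 0 < a := div_pos hM0 hα0
  have hcM : c * M = M - a := by rw [hcdef, hadef]; field_simp
  have haM1 : a ≤ M - 1 := by rw [hcM] at hMc; linarith
  have haM : a < M := lt_of_le_of_lt haM1 (by linarith)
  have hM1pos : (0:ℝ) < M - 1 := lt_of_lt_of_le ha0 haM1
  -- key inequality
  have key : Real.exp a * a^(-γ) < γ * (Real.exp (M-1) * M^(-(γ+1))) := by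
    have hfact : γ * (Real.exp (M-1) * M^(-(γ+1)))
        = (Real.exp a * a^(-γ)) * (γ * α^(-γ) * (Real.exp (c*M-1)/M)) := by
      rw [show M - 1 = a + (c*M - 1) by rw [hcM]; ring, Real.exp_add,
        show -(γ+1) = -γ + (-1) by ring, Real.rpow_add hM0, Real.rpow_neg_one,
        hadef, Real.div_rpow hM0.le hα0.le, Real.rpow_neg hα0.le γ, Real.rpow_neg hM0.le γ]
      have hαγ : (0:ℝ) < α^γ := Real.rpow_pos_of_pos hα0 γ
      have hMγ : (0:ℝ) < M^γ := Real.rpow_pos_of_pos hM0 γ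
      field_simp
    rw [hfact]
    have hB : 0 < Real.exp a * a^(-γ) :=
      mul_pos (Real.exp_pos a) (Real.rpow_pos_of_pos ha0 (-γ))
    exact (lt_mul_iff_one_lt_right hB).2 hgt
  -- denominator positivity
  have hD : ∀ t : ℝ, M ≤ t → 0 < ∫ s in a..t, Real.exp s * s ^ (-(2*γ)) := by
    intro t hMt
    have hat : a < t := lt_of_lt_of_le haM hMt
    have ht0 : (0:ℝ) < t := lt_of_lt_of_le hM0 hMt
    refine intervalIntegral.intervalIntegral_pos_of_pos_on (myInt (2*γ) ha0 ht0) ?_ hat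
    intro x hx
    have hx0 : 0 < x := lt_trans ha0 hx.1
    positivity
  -- numerator positivity
  have hN : ∀ t : ℝ, M ≤ t →
      0 < (∫ s in a..t, Real.exp s * s ^ (-γ)) - Real.exp t * t ^ (-γ) := by
    intro t hMt
    have hat : a ≤ t := le_of_lt (lt_of_lt_of_le haM hMt)
    have ht0 : (0:ℝ) < t := lt_of_lt_of_le hM0 hMt
    have hIlow : Real.exp (M-1) * M^(-(γ+1)) ≤
        ∫ s in a..t, Real.exp s * s ^ (-(γ+1)) := by
      have e1 : (∫ s in a..(M-1), Real.exp s * s ^ (-(γ+1))) +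
          (∫ s in (M-1)..M, Real.exp s * s ^ (-(γ+1))) =
          ∫ s in a..M, Real.exp s * s ^ (-(γ+1)) :=
        intervalIntegral.integral_add_adjacent_intervals (myInt _ ha0 hM1pos)
          (myInt _ hM1pos hM0)
      have e2 : (∫ s in a..M, Real.exp s * s ^ (-(γ+1))) +
          (∫ s in M..t, Real.exp s * s ^ (-(γ+1))) =
          ∫ s in a..t, Real.exp s * s ^ (-(γ+1)) :=
        intervalIntegral.integral_add_adjacent_intervals (myInt _ ha0 hM0) (myInt _ hM0 ht0)
      have n1 : 0 ≤ ∫ s in a..(M-1), Real.exp s * s ^ (-(γ+1)) :=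
        intervalIntegral.integral_nonneg haM1 (fun s hs =>
          mul_nonneg (Real.exp_pos s).le (Real.rpow_nonneg (ha0.trans_le hs.1).le _))
      have n3 : 0 ≤ ∫ s in M..t, Real.exp s * s ^ (-(γ+1)) :=
        intervalIntegral.integral_nonneg hMt (fun s hs =>
          mul_nonneg (Real.exp_pos s).le (Real.rpow_nonneg (hM0.trans_le hs.1).le _))
      have hmid : Real.exp (M-1) * M^(-(γ+1)) ≤
          ∫ s in (M-1)..M, Real.exp s * s ^ (-(γ+1)) := by
        have hcst : (∫ _ in (M-1)..M, (Real.exp (M-1) * M^(-(γ+1)) : ℝ)) =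
            Real.exp (M-1) * M^(-(γ+1)) := by
          rw [intervalIntegral.integral_const]
          simp
        rw [← hcst]
        refine intervalIntegral.integral_mono_on (by linarith)
          (intervalIntegrable_const) (myInt _ hM1pos hM0) (fun x hx => ?_)
        have hx0 : 0 < x := lt_of_lt_of_le hM1pos hx.1
        exact mul_le_mul (Real.exp_le_exp.2 hx.1)
          (Real.rpow_le_rpow_of_nonpos hx0 hx.2 (by linarith))
          (Real.rpow_nonneg hM0.le _) (Real.exp_pos x).le
      linarith
    rw [myIbp γ ha0 hat]
    have := mul_le_mul_of_nonneg_left hIlow hγ.le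
    linarith
  have hB := myRatio (2*γ) (by positivity) ha0
  have hIr := myRatio (γ+1) (by positivity) ha0
  have hC0 := myConstDecay (Real.exp a * a^(-γ)) (γ+1)
  have hA : Tendsto (fun t : ℝ =>
      ((∫ s in a..t, Real.exp s * s ^ (-γ)) - Real.exp t * t ^ (-γ)) * t^(γ+1) / Real.exp t)
      atTop (nhds γ) := by
    have hcomb : Tendsto (fun t : ℝ =>
        γ * ((∫ s in a..t, Real.exp s * s ^ (-(γ+1))) * t^(γ+1) / Real.exp t) -
          (Real.exp a * a^(-γ)) * t^(γ+1) / Real.exp t) atTop (nhds γ) := by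
      have := (hIr.const_mul γ).sub hC0
      simpa [mul_div_assoc] using this
    refine hcomb.congr' ?_
    filter_upwards [eventually_ge_atTop (max a 1)] with t ht
    have hat : a ≤ t := le_trans (le_max_left _ _) ht
    rw [myIbp γ ha0 hat]
    ring
  have hAB := hA.div hB one_ne_zero
  rw [div_one] at hAB
  have hfeq : (fun t : ℝ =>
      (((∫ s in a..t, Real.exp s * s ^ (-γ)) - Real.exp t * t ^ (-γ)) * t^(γ+1) / Real.exp t) /
        ((∫ s in a..t, Real.exp s * s ^ (-(2*γ))) * t^(2*γ) / Real.exp t) * t^(γ-1))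
      =ᶠ[atTop] fQuot γ M α := by
    filter_upwards [eventually_ge_atTop (max M 1)] with t ht
    have hMt : M ≤ t := le_trans (le_max_left _ _) ht
    have ht0 : (0:ℝ) < t := lt_of_lt_of_le one_pos (le_trans (le_max_right _ _) ht)
    have hDt := hD t hMt
    have hXY : t^(γ+1) * t^(γ-1) = t^(2*γ) := by
      rw [← Real.rpow_add ht0]; congr 1; ring
    have hfq : fQuot γ M α t =
        ((∫ s in a..t, Real.exp s * s ^ (-γ)) - Real.exp t * t ^ (-γ)) /
          ∫ s in a..t, Real.exp s * s ^ (-(2*γ)) := rfl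
    rw [hfq, ← hXY]
    have hp1 : (0:ℝ) < t^(γ+1) := Real.rpow_pos_of_pos ht0 _
    have hp2 : (0:ℝ) < t^(γ-1) := Real.rpow_pos_of_pos ht0 _
    field_simp
  refine ⟨?_, ?_, ?_⟩
  · intro t hMt
    have hfq : fQuot γ M α t =
        ((∫ s in a..t, Real.exp s * s ^ (-γ)) - Real.exp t * t ^ (-γ)) /
          ∫ s in a..t, Real.exp s * s ^ (-(2*γ)) := rfl
    rw [hfq]
    exact div_pos (hN t hMt) (hD t hMt)
  · intro hγ1
    refine Filter.Tendsto.congr' hfeq ?_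
    rw [hγ1] at hAB ⊢
    simpa using hAB.mul_const (1:ℝ)
  · intro hγ1
    refine Filter.Tendsto.congr' hfeq ?_
    exact Filter.Tendsto.pos_mul_atTop hγ hAB (tendsto_rpow_atTop (by linarith))
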